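/- If e is a real random variable with continuous strictly increasing c.d.f. F_e and there exist constants a, b with b ≠ 0 such that Φ(a + b·e) = F_e(e) almost surely, then e is normally distributed (with mean −a/b and standard deviation 1/|b|). -/

import Mathlib

open MeasureTheory ProbabilityTheory

noncomputable def stdPhi (x : ℝ) : ℝ := ∫ t in Set.Iic x, gaussianPDFReal 0 1 t

lemma stdPhi_sub (x y : ℝ) :
    stdPhi y - stdPhi x = ∫ t in x..y, gaussianPDFReal 0 1 t := by
  exact intervalIntegral.integral_Iic_sub_Iic
    (integrable_gaussianPDFReal 0 1).integrableOn (integrable_gaussianPDFReal 0 1).integrableOn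

lemma stdPhi_strictMono : StrictMono stdPhi := by
  intro x y h
  have hpos := intervalIntegral.intervalIntegral_pos_of_pos (f := gaussianPDFReal 0 1)
    ((integrable_gaussianPDFReal 0 1).intervalIntegrable)
    (fun t => gaussianPDFReal_pos 0 1 t one_ne_zero) h
  have := stdPhi_sub x y
  linarith

lemma stdPhi_continuous : Continuous stdPhi := by
  have h : ∀ x, stdPhi x = stdPhi 0 + ∫ t in (0:ℝ)..x, gaussianPDFReal 0 1 t := by
    intro x
    have := stdPhi_sub 0 x
    linarith
  have hc : Continuous fun x => stdPhi 0 + ∫ t in (0:ℝ)..x, gaussianPDFReal 0 1 t :=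
    continuous_const.add ((integrable_gaussianPDFReal 0 1).continuous_primitive 0)
  exact hc.congr fun x => (h x).symm

lemma gaussianReal_Iic (s : ℝ) :
    gaussianReal 0 1 (Set.Iic s) = ENNReal.ofReal (stdPhi s) :=
  gaussianReal_apply_eq_integral 0 one_ne_zero _

/-- If `e` has continuous strictly increasing c.d.f. `F_e` and `Φ(a + b·e) = F_e(e)` a.s.
with `b ≠ 0`, then `e ~ N(−a/b, 1/b²)`. -/
theorem stmt14 {Ω : Type*} [MeasurableSpace Ω] (P : Measure Ω) [IsProbabilityMeasure P]
    (e : Ω → ℝ) (he : Measurable e)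
    (F : ℝ → ℝ) (hF : ∀ t, F t = (P {ω | e ω ≤ t}).toReal)
    (hFc : Continuous F) (hFm : StrictMono F)
    (a b : ℝ) (hb : b ≠ 0)
    (heq : ∀ᵐ ω ∂P, stdPhi (a + b * e ω) = F (e ω)) :
    Measure.map e P = gaussianReal (-a / b) (Real.toNNReal (1 / b ^ 2)) := by
  set ν := Measure.map e P with hν
  haveI : IsProbabilityMeasure ν := Measure.isProbabilityMeasure_map he.aemeasurable
  -- F is the cdf of ν
  have hFν : ∀ t, F t = (ν (Set.Iic t)).toReal := by
    intro t
    rw [hF t, hν, Measure.map_apply he measurableSet_Iic]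
    rfl
  -- the set where equality holds
  set S : Set ℝ := {t | stdPhi (a + b * t) = F t} with hS
  have hScl : IsClosed S :=
    isClosed_eq (stdPhi_continuous.comp (continuous_const.add (continuous_const.mul continuous_id)))
      hFc
  have hSfull : ν Sᶜ = 0 := by
    rw [hν, Measure.map_apply he (hScl.isOpen_compl.measurableSet)]
    have : {ω | e ω ∈ Sᶜ} ⊆ {ω | ¬ stdPhi (a + b * e ω) = F (e ω)} := fun ω h => h
    exact measure_mono_null this (ae_iff.mp heq)
  -- every point is in S
  have hall : ∀ t, stdPhi (a + b * t) = F t := by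
    intro t
    by_contra ht
    obtain ⟨ε, hε, hball⟩ := Metric.isOpen_iff.mp hScl.isOpen_compl t ht
    -- the interval Ioc (t - ε/2) t has positive ν-measure but is in Sᶜ
    have hsub : Set.Ioc (t - ε/2) t ⊆ Sᶜ := by
      intro x hx
      apply hball
      rw [Metric.mem_ball, Real.dist_eq, abs_lt]
      constructor <;> [linarith [hx.1]; linarith [hx.2]]
    have hle : ν (Set.Ioc (t - ε/2) t) ≤ ν Sᶜ := measure_mono hsub
    have hpos : 0 < (ν (Set.Ioc (t - ε/2) t)).toReal := by
      have : Set.Ioc (t - ε/2) t = Set.Iic t \ Set.Iic (t - ε/2) := by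
        rw [Set.Iic_sdiff_Iic]
      rw [this, measure_diff (Set.Iic_subset_Iic.2 (by linarith)) nullMeasurableSet_Iic
        (measure_ne_top ν _), ENNReal.toReal_sub_of_le (measure_mono (Set.Iic_subset_Iic.2
        (by linarith))) (measure_ne_top ν _)]
      have := hFm (show t - ε/2 < t by linarith)
      rw [hFν (t - ε/2), hFν t] at this
      linarith
    rw [hSfull] at hle
    simp only [nonpos_iff_eq_zero] at hle
    rw [hle] at hpos
    simp at hpos
  -- b must be positive
  have hbpos : 0 < b := by
    rcases lt_or_gt_of_ne hb with hneg | hpos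
    · exfalso
      have h01 : F 0 < F 1 := hFm one_pos
      have : stdPhi (a + b * 1) < stdPhi (a + b * 0) :=
        stdPhi_strictMono (by nlinarith)
      rw [hall 0, hall 1] at this
      linarith
    · exact hpos
  -- variance is nonzero
  have hv : (Real.toNNReal (1 / b ^ 2)) ≠ 0 := by
    simp only [ne_eq, Real.toNNReal_eq_zero, not_le]
    positivity
  -- the gaussian as an affine image of the standard gaussian
  have hmap : gaussianReal (-a / b) (Real.toNNReal (1 / b ^ 2))
      = Measure.map (· + (-a / b)) (Measure.map (b⁻¹ * ·) (gaussianReal 0 1)) := by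
    rw [gaussianReal_map_const_mul b⁻¹, gaussianReal_map_add_const (-a/b)]
    congr 1
    · ring
    · rw [← NNReal.coe_inj]
      push_cast
      rw [Real.coe_toNNReal _ (by positivity)]
      field_simp
  refine Measure.ext_of_Iic ν _ fun t => ?_
  have h1 : ν (Set.Iic t) = ENNReal.ofReal (F t) := by
    rw [hFν t, ENNReal.ofReal_toReal (measure_ne_top ν _)]
  rw [h1, hmap, Measure.map_apply (measurable_id'.add_const _) measurableSet_Iic,
    Measure.map_apply (measurable_id'.const_mul _) ?_]
  · have hset : ((b⁻¹ * ·) ⁻¹' ((· + (-a / b)) ⁻¹' Set.Iic t)) = Set.Iic (a + b * t) := by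
      ext x
      simp only [Set.mem_preimage, Set.mem_Iic]
      have hx : b⁻¹ * x + -a / b = (x - a) / b := by ring
      rw [hx, div_le_iff₀ hbpos]
      constructor <;> intro h <;> linarith
    rw [hset, gaussianReal_Iic, hall t]
  · exact (measurable_id'.add_const _) measurableSet_Iic
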